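/- In the field ℚ(s,a,b,z₁,z₂,z₃) of rational functions, set u = a², v = b², α = (a-b)², β = (a+b)², x(z) = s·(α·z² - β)/(z² - 1), W(z) = (α-β)·z/(α·z² - β), and write xᵢ = x(zᵢ), Wᵢ = W(zᵢ). Then [ 2s³·u·v·(1 - (u-v)²·s²·(1/(x₁x₂) + 1/(x₂x₃) + 1/(x₃x₁)) + 2(u+v)(u-v)²·s³/(x₁x₂x₃)) / (x₁²·x₂²·x₃²·W₁³·W₂³·W₃³) ] · x'(z₁)·x'(z₂)·x'(z₃) = (1/(α-β)²)·( -α + β/(z₁²·z₂²·z₃²) ), where x'(z) denotes the derivative of x(z) with respect to z. -/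

import Mathlib

noncomputable section

/-- The field `ℚ(s,a,b,z₁,z₂,z₃)` of rational functions in six indeterminates over `ℚ`. -/
abbrev F6 : Type := FractionRing (MvPolynomial (Fin 6) ℚ)

def fs : F6 := algebraMap (MvPolynomial (Fin 6) ℚ) F6 (MvPolynomial.X 0)
def fa : F6 := algebraMap (MvPolynomial (Fin 6) ℚ) F6 (MvPolynomial.X 1)
def fb : F6 := algebraMap (MvPolynomial (Fin 6) ℚ) F6 (MvPolynomial.X 2)
def fz1 : F6 := algebraMap (MvPolynomial (Fin 6) ℚ) F6 (MvPolynomial.X 3)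
def fz2 : F6 := algebraMap (MvPolynomial (Fin 6) ℚ) F6 (MvPolynomial.X 4)
def fz3 : F6 := algebraMap (MvPolynomial (Fin 6) ℚ) F6 (MvPolynomial.X 5)

def fu : F6 := fa ^ 2
def fv : F6 := fb ^ 2
def fα : F6 := (fa - fb) ^ 2
def fβ : F6 := (fa + fb) ^ 2
/-- `x(z) = s(αz²-β)/(z²-1)` as a function of the coordinate. -/
def fx (z : F6) : F6 := fs * (fα * z ^ 2 - fβ) / (z ^ 2 - 1)
/-- `W(z) = (α-β)z/(αz²-β)`, equal to `sqrt(1-2s(u+v)/x+s²(u-v)²/x²)` on the curve. -/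
def fW (z : F6) : F6 := (fα - fβ) * z / (fα * z ^ 2 - fβ)

lemma nez (p : MvPolynomial (Fin 6) ℚ)
    (h : MvPolynomial.aeval (![1,2,1,2,5,7] : Fin 6 → ℚ) p ≠ 0) :
    algebraMap (MvPolynomial (Fin 6) ℚ) F6 p ≠ 0 := by
  intro hp
  apply h
  have hinj := IsFractionRing.injective (MvPolynomial (Fin 6) ℚ) F6
  have : p = 0 := by apply hinj; rw [hp, map_zero]
  simp [this]

lemma hs_ne : fs ≠ 0 := by apply nez; simp

open MvPolynomial in
lemma hab_ne : fα - fβ ≠ 0 := by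
  have : fα - fβ = algebraMap (MvPolynomial (Fin 6) ℚ) F6
      ((X 1 - X 2) ^ 2 - (X 1 + X 2) ^ 2) := by simp [fα, fβ, fa, fb]
  rw [this]; apply nez; simp; norm_num

open MvPolynomial in
lemma hden1 : fα * fz1 ^ 2 - fβ ≠ 0 := by
  have : fα * fz1 ^ 2 - fβ = algebraMap (MvPolynomial (Fin 6) ℚ) F6
      ((X 1 - X 2) ^ 2 * (X 3) ^ 2 - (X 1 + X 2) ^ 2) := by simp [fα, fβ, fz1, fa, fb]
  rw [this]; apply nez; simp; norm_num

open MvPolynomial in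
lemma hden2 : fα * fz2 ^ 2 - fβ ≠ 0 := by
  have : fα * fz2 ^ 2 - fβ = algebraMap (MvPolynomial (Fin 6) ℚ) F6
      ((X 1 - X 2) ^ 2 * (X 4) ^ 2 - (X 1 + X 2) ^ 2) := by simp [fα, fβ, fz2, fa, fb]
  rw [this]; apply nez; simp; norm_num

open MvPolynomial in
lemma hden3 : fα * fz3 ^ 2 - fβ ≠ 0 := by
  have : fα * fz3 ^ 2 - fβ = algebraMap (MvPolynomial (Fin 6) ℚ) F6
      ((X 1 - X 2) ^ 2 * (X 5) ^ 2 - (X 1 + X 2) ^ 2) := by simp [fα, fβ, fz3, fa, fb]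
  rw [this]; apply nez
  simp [show (![1,2,1,2,5,7] : Fin 6 → ℚ) 5 = 7 from rfl]
  norm_num

open MvPolynomial in
lemma hq1 : fz1 ^ 2 - 1 ≠ 0 := by
  have : fz1 ^ 2 - (1:F6) = algebraMap (MvPolynomial (Fin 6) ℚ) F6 ((X 3) ^ 2 - 1) := by
    simp [fz1]
  rw [this]; apply nez; simp; norm_num

open MvPolynomial in
lemma hq2 : fz2 ^ 2 - 1 ≠ 0 := by
  have : fz2 ^ 2 - (1:F6) = algebraMap (MvPolynomial (Fin 6) ℚ) F6 ((X 4) ^ 2 - 1) := by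
    simp [fz2]
  rw [this]; apply nez; simp; norm_num

open MvPolynomial in
lemma hq3 : fz3 ^ 2 - 1 ≠ 0 := by
  have : fz3 ^ 2 - (1:F6) = algebraMap (MvPolynomial (Fin 6) ℚ) F6 ((X 5) ^ 2 - 1) := by
    simp [fz3]
  rw [this]; apply nez
  simp [show (![1,2,1,2,5,7] : Fin 6 → ℚ) 5 = 7 from rfl]
  norm_num

lemma hz1_ne : fz1 ≠ 0 := by apply nez; simp
lemma hz2_ne : fz2 ≠ 0 := by apply nez; simp
lemma hz3_ne : fz3 ≠ 0 := by
  apply nez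
  simp [show (![1,2,1,2,5,7] : Fin 6 → ℚ) 5 = 7 from rfl]

/-- Derivative of `x(z)`. -/
lemma deriv_fx (D : Derivation ℚ F6 F6) (z : F6) (hz : D z = 1)
    (hs : D fs = 0) (ha : D fa = 0) (hb : D fb = 0) (hq : z ^ 2 - 1 ≠ 0) :
    D (fx z) = 2 * fs * z * (fβ - fα) / (z ^ 2 - 1) ^ 2 := by
  have hα : D fα = 0 := by simp [fα, Derivation.leibniz, ha, hb]
  have hβ : D fβ = 0 := by simp [fβ, Derivation.leibniz, ha, hb]
  rw [fx, Derivation.leibniz_div]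
  simp only [Derivation.leibniz, Derivation.leibniz_pow, hs, hα, hβ, hz, map_sub, map_one,
    Derivation.map_one_eq_zero, smul_eq_mul]
  field_simp
  ring

/-- Per-variable cancellation `x'(z)/(x(z)²W(z)³) = -2(αz²-β)/(s(α-β)²z²)`. -/
lemma keygen (z : F6) (hz : z ≠ 0) (hq : z ^ 2 - 1 ≠ 0) (hA : fα * z ^ 2 - fβ ≠ 0) :
    (2 * fs * z * (fβ - fα) / (z ^ 2 - 1) ^ 2) / (fx z ^ 2 * fW z ^ 3)
      = -2 * (fα * z ^ 2 - fβ) / (fs * (fα - fβ) ^ 2 * z ^ 2) := by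
  rw [fx, fW]
  have hs := hs_ne
  have hab := hab_ne
  field_simp
  ring

/-- `1/(x(y)x(w))`. -/
lemma invgen (y w : F6) (hqy : y ^ 2 - 1 ≠ 0) (hqw : w ^ 2 - 1 ≠ 0)
    (hAy : fα * y ^ 2 - fβ ≠ 0) (hAw : fα * w ^ 2 - fβ ≠ 0) :
    1 / (fx y * fx w)
      = (y ^ 2 - 1) * (w ^ 2 - 1) / (fs ^ 2 * (fα * y ^ 2 - fβ) * (fα * w ^ 2 - fβ)) := by
  rw [fx, fx]
  have hs := hs_ne
  field_simp

/-- `1/(x₁x₂x₃)` term. -/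
lemma invgen3 (y w t : F6) (hqy : y ^ 2 - 1 ≠ 0) (hqw : w ^ 2 - 1 ≠ 0) (hqt : t ^ 2 - 1 ≠ 0)
    (hAy : fα * y ^ 2 - fβ ≠ 0) (hAw : fα * w ^ 2 - fβ ≠ 0) (hAt : fα * t ^ 2 - fβ ≠ 0) :
    2 * ((fα + fβ) / 2) * (fα * fβ) * fs ^ 3 / (fx y * fx w * fx t)
      = fα * fβ * (fα + fβ) * ((y ^ 2 - 1) * (w ^ 2 - 1) * (t ^ 2 - 1))
          / ((fα * y ^ 2 - fβ) * (fα * w ^ 2 - fβ) * (fα * t ^ 2 - fβ)) := by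
  rw [fx, fx, fx]
  have hs := hs_ne
  field_simp



section generic
variable {K : Type*} [Field K] [CharZero K]

lemma brk (s al be a1 a2 a3 q1 q2 q3 : K) (hs : s ≠ 0)
    (h1 : a1 ≠ 0) (h2 : a2 ≠ 0) (h3 : a3 ≠ 0) :
    1 - al * be * s ^ 2 *
        (q1 * q2 / (s ^ 2 * a1 * a2) + q2 * q3 / (s ^ 2 * a2 * a3)
          + q3 * q1 / (s ^ 2 * a3 * a1))
      + al * be * (al + be) * (q1 * q2 * q3) / (a1 * a2 * a3)
    = (a1 * a2 * a3 - al * be * (q1 * q2 * a3 + q2 * q3 * a1 + q3 * q1 * a2)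
        + al * be * (al + be) * (q1 * q2 * q3)) / (a1 * a2 * a3) := by
  have hs2 : s ^ 2 ≠ 0 := pow_ne_zero _ hs
  have d12 : s ^ 2 * a1 * a2 ≠ 0 := mul_ne_zero (mul_ne_zero hs2 h1) h2
  have d23 : s ^ 2 * a2 * a3 ≠ 0 := mul_ne_zero (mul_ne_zero hs2 h2) h3
  have d31 : s ^ 2 * a3 * a1 ≠ 0 := mul_ne_zero (mul_ne_zero hs2 h3) h1
  have d123 : a1 * a2 * a3 ≠ 0 := mul_ne_zero (mul_ne_zero h1 h2) h3
  rw [div_add_div _ _ d12 d23, div_add_div _ _ (mul_ne_zero d12 d23) d31,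
    eq_div_iff d123]
  field_simp

lemma prd (s c z1 z2 z3 a1 a2 a3 N : K) (hs : s ≠ 0) (hc : c ≠ 0)
    (hz1 : z1 ≠ 0) (hz2 : z2 ≠ 0) (hz3 : z3 ≠ 0)
    (h1 : a1 ≠ 0) (h2 : a2 ≠ 0) (h3 : a3 ≠ 0) :
    s ^ 3 * c ^ 2 / 8 * (N / (a1 * a2 * a3))
        * (-2 * a1 / (s * c ^ 2 * z1 ^ 2))
        * (-2 * a2 / (s * c ^ 2 * z2 ^ 2))
        * (-2 * a3 / (s * c ^ 2 * z3 ^ 2))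
      = -N / (c ^ 4 * (z1 ^ 2 * z2 ^ 2 * z3 ^ 2)) := by
  rw [div_mul_div_comm, div_mul_div_comm, div_mul_div_comm, div_mul_div_comm,
    div_eq_div_iff]
  · ring
  · refine mul_ne_zero (mul_ne_zero (mul_ne_zero (mul_ne_zero ?_ ?_) ?_) ?_) ?_ <;>
      first
        | exact mul_ne_zero (mul_ne_zero hs (pow_ne_zero _ hc)) (pow_ne_zero _ hz1)
        | exact mul_ne_zero (mul_ne_zero hs (pow_ne_zero _ hc)) (pow_ne_zero _ hz2)
        | exact mul_ne_zero (mul_ne_zero hs (pow_ne_zero _ hc)) (pow_ne_zero _ hz3)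
        | exact mul_ne_zero (mul_ne_zero h1 h2) h3
        | norm_num
  · exact mul_ne_zero (pow_ne_zero _ hc)
      (mul_ne_zero (mul_ne_zero (pow_ne_zero _ hz1) (pow_ne_zero _ hz2)) (pow_ne_zero _ hz3))

lemma fin' (c Z al be : K) (hc : c ≠ 0) (hZ : Z ≠ 0) :
    -(c ^ 2 * (al * Z - be)) / (c ^ 4 * Z) = 1 / c ^ 2 * (-al + be / Z) := by
  field_simp
  ring

lemma fin (al be z1 z2 z3 : K) (hab : al - be ≠ 0)
    (hz1 : z1 ≠ 0) (hz2 : z2 ≠ 0) (hz3 : z3 ≠ 0) :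
    -((al * z1 ^ 2 - be) * (al * z2 ^ 2 - be) * (al * z3 ^ 2 - be)
        - al * be * ((z1 ^ 2 - 1) * (z2 ^ 2 - 1) * (al * z3 ^ 2 - be)
            + (z2 ^ 2 - 1) * (z3 ^ 2 - 1) * (al * z1 ^ 2 - be)
            + (z3 ^ 2 - 1) * (z1 ^ 2 - 1) * (al * z2 ^ 2 - be))
        + al * be * (al + be) * ((z1 ^ 2 - 1) * (z2 ^ 2 - 1) * (z3 ^ 2 - 1)))
      / ((al - be) ^ 4 * (z1 ^ 2 * z2 ^ 2 * z3 ^ 2))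
    = 1 / (al - be) ^ 2 * (-al + be / (z1 ^ 2 * z2 ^ 2 * z3 ^ 2)) := by
  have hP : (al * z1 ^ 2 - be) * (al * z2 ^ 2 - be) * (al * z3 ^ 2 - be)
        - al * be * ((z1 ^ 2 - 1) * (z2 ^ 2 - 1) * (al * z3 ^ 2 - be)
            + (z2 ^ 2 - 1) * (z3 ^ 2 - 1) * (al * z1 ^ 2 - be)
            + (z3 ^ 2 - 1) * (z1 ^ 2 - 1) * (al * z2 ^ 2 - be))
        + al * be * (al + be) * ((z1 ^ 2 - 1) * (z2 ^ 2 - 1) * (z3 ^ 2 - 1))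
      = (al - be) ^ 2 * (al * (z1 ^ 2 * z2 ^ 2 * z3 ^ 2) - be) := by ring
  rw [hP]
  exact fin' (al - be) (z1 ^ 2 * z2 ^ 2 * z3 ^ 2) al be hab
    (mul_ne_zero (mul_ne_zero (pow_ne_zero _ hz1) (pow_ne_zero _ hz2)) (pow_ne_zero _ hz3))

end generic

/-- The form `W_{0,3}` of the dessin spectral curve: the genus-zero three-point function of
dessins, rewritten via the global coordinates `zᵢ`, equals
`(1/(α-β)²)(-α + β/(z₁²z₂²z₃²))`. The partial derivatives with respect to `zᵢ` are taken
via the (unique) derivations `∂ᵢ` on `ℚ(s,a,b,z₁,z₂,z₃)` killing the other generators with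
`∂ᵢzᵢ = 1`. -/
theorem dessin_W03_in_global_coordinate
    (D₁ D₂ D₃ : Derivation ℚ F6 F6)
    (hD₁s : D₁ fs = 0) (hD₁a : D₁ fa = 0) (hD₁b : D₁ fb = 0)
    (hD₁z1 : D₁ fz1 = 1) (hD₁z2 : D₁ fz2 = 0) (hD₁z3 : D₁ fz3 = 0)
    (hD₂s : D₂ fs = 0) (hD₂a : D₂ fa = 0) (hD₂b : D₂ fb = 0)
    (hD₂z1 : D₂ fz1 = 0) (hD₂z2 : D₂ fz2 = 1) (hD₂z3 : D₂ fz3 = 0)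
    (hD₃s : D₃ fs = 0) (hD₃a : D₃ fa = 0) (hD₃b : D₃ fb = 0)
    (hD₃z1 : D₃ fz1 = 0) (hD₃z2 : D₃ fz2 = 0) (hD₃z3 : D₃ fz3 = 1) :
    (2 * fs ^ 3 * fu * fv *
        (1 - (fu - fv) ^ 2 * fs ^ 2 *
            (1 / (fx fz1 * fx fz2) + 1 / (fx fz2 * fx fz3) + 1 / (fx fz3 * fx fz1))
          + 2 * (fu + fv) * (fu - fv) ^ 2 * fs ^ 3 / (fx fz1 * fx fz2 * fx fz3))
        / (fx fz1 ^ 2 * fx fz2 ^ 2 * fx fz3 ^ 2 * fW fz1 ^ 3 * fW fz2 ^ 3 * fW fz3 ^ 3))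
      * D₁ (fx fz1) * D₂ (fx fz2) * D₃ (fx fz3)
      = (1 / (fα - fβ) ^ 2) * (-fα + fβ / (fz1 ^ 2 * fz2 ^ 2 * fz3 ^ 2)) := by
  have key1 : D₁ (fx fz1) / (fx fz1 ^ 2 * fW fz1 ^ 3)
      = -2 * (fα * fz1 ^ 2 - fβ) / (fs * (fα - fβ) ^ 2 * fz1 ^ 2) := by
    rw [deriv_fx D₁ fz1 hD₁z1 hD₁s hD₁a hD₁b hq1]
    exact keygen fz1 hz1_ne hq1 hden1
  have key2 : D₂ (fx fz2) / (fx fz2 ^ 2 * fW fz2 ^ 3)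
      = -2 * (fα * fz2 ^ 2 - fβ) / (fs * (fα - fβ) ^ 2 * fz2 ^ 2) := by
    rw [deriv_fx D₂ fz2 hD₂z2 hD₂s hD₂a hD₂b hq2]
    exact keygen fz2 hz2_ne hq2 hden2
  have key3 : D₃ (fx fz3) / (fx fz3 ^ 2 * fW fz3 ^ 3)
      = -2 * (fα * fz3 ^ 2 - fβ) / (fs * (fα - fβ) ^ 2 * fz3 ^ 2) := by
    rw [deriv_fx D₃ fz3 hD₃z3 hD₃s hD₃a hD₃b hq3]
    exact keygen fz3 hz3_ne hq3 hden3
  have e0 : 2 * fs ^ 3 * fu * fv = fs ^ 3 * (fα - fβ) ^ 2 / 8 := by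
    rw [fu, fv, fα, fβ]; ring
  have e2 : (fu - fv) ^ 2 = fα * fβ := by rw [fu, fv, fα, fβ]; ring
  have e3 : fu + fv = (fα + fβ) / 2 := by rw [fu, fv, fα, fβ]; ring
  calc (2 * fs ^ 3 * fu * fv *
        (1 - (fu - fv) ^ 2 * fs ^ 2 *
            (1 / (fx fz1 * fx fz2) + 1 / (fx fz2 * fx fz3) + 1 / (fx fz3 * fx fz1))
          + 2 * (fu + fv) * (fu - fv) ^ 2 * fs ^ 3 / (fx fz1 * fx fz2 * fx fz3))
        / (fx fz1 ^ 2 * fx fz2 ^ 2 * fx fz3 ^ 2 * fW fz1 ^ 3 * fW fz2 ^ 3 * fW fz3 ^ 3))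
      * D₁ (fx fz1) * D₂ (fx fz2) * D₃ (fx fz3)
      = (2 * fs ^ 3 * fu * fv) *
        (1 - (fu - fv) ^ 2 * fs ^ 2 *
            (1 / (fx fz1 * fx fz2) + 1 / (fx fz2 * fx fz3) + 1 / (fx fz3 * fx fz1))
          + 2 * (fu + fv) * (fu - fv) ^ 2 * fs ^ 3 / (fx fz1 * fx fz2 * fx fz3))
        * (D₁ (fx fz1) / (fx fz1 ^ 2 * fW fz1 ^ 3))
        * (D₂ (fx fz2) / (fx fz2 ^ 2 * fW fz2 ^ 3))
        * (D₃ (fx fz3) / (fx fz3 ^ 2 * fW fz3 ^ 3)) := by ring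
    _ = (1 / (fα - fβ) ^ 2) * (-fα + fβ / (fz1 ^ 2 * fz2 ^ 2 * fz3 ^ 2)) := by
        rw [key1, key2, key3, e0, e2, e3,
          invgen fz1 fz2 hq1 hq2 hden1 hden2,
          invgen fz2 fz3 hq2 hq3 hden2 hden3,
          invgen fz3 fz1 hq3 hq1 hden3 hden1,
          invgen3 fz1 fz2 fz3 hq1 hq2 hq3 hden1 hden2 hden3]
        rw [brk fs fα fβ _ _ _ _ _ _ hs_ne hden1 hden2 hden3,
          prd fs (fα - fβ) fz1 fz2 fz3 _ _ _ _ hs_ne hab_ne hz1_ne hz2_ne hz3_ne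
            hden1 hden2 hden3]
        exact fin fα fβ fz1 fz2 fz3 hab_ne hz1_ne hz2_ne hz3_ne

end
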